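/- arXiv:2407.11528 — 2 statements merged into one kernel-verified Lean document; each statement's English description precedes it below -/
import Mathlib

section
/- If ψ : 𝔯L → M is a frame homomorphism from the frame of round ideals of a proximity frame L to a frame M, then ψ = ς_M ∘ 𝔯(ψ∘κ_L); concretely, for every round ideal I, ψ(I) = ⋁{b ∈ M | b ≺ ψ(κ_L(c)) for some c ∈ I}. -/
open Set

variable {L M : Type*}

/-- An ideal of a frame: contains ⊥, is a downset, and is closed under binary joins. -/
def IsIdl [Order.Frame L] (I : Set L) : Prop :=
  ⊥ ∈ I ∧ (∀ a b : L, a ≤ b → b ∈ I → a ∈ I) ∧ (∀ a b : L, a ∈ I → b ∈ I → a ⊔ b ∈ I)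

/-- Roundness of a subset with respect to a relation `r`. -/
def IsRnd [Order.Frame L] (r : L → L → Prop) (I : Set L) : Prop :=
  ∀ a ∈ I, ∃ b ∈ I, r a b

/-- A round ideal. -/
def RndIdl [Order.Frame L] (r : L → L → Prop) (I : Set L) : Prop :=
  IsIdl I ∧ IsRnd r I

/-- The join of a collection of ideals: all finite joins of elements of the union. -/
def idlJoin [Order.Frame L] (𝒥 : Set (Set L)) : Set L :=
  {a | ∃ F : Finset L, (↑F : Set L) ⊆ ⋃₀ 𝒥 ∧ a = F.sup id}

/-- The way-below relation in the frame of round ideals (directed joins are unions). -/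
def wb [Order.Frame L] (r : L → L → Prop) (I J : Set L) : Prop :=
  ∀ 𝒟 : Set (Set L), 𝒟.Nonempty → (∀ K ∈ 𝒟, RndIdl r K) →
    DirectedOn (· ⊆ ·) 𝒟 → J ⊆ ⋃₀ 𝒟 → ∃ K ∈ 𝒟, I ⊆ K

/-- A proximity on a frame. -/
structure IsProx [Order.Frame L] (r : L → L → Prop) : Prop where
  rel_le : ∀ a b : L, r a b → a ≤ b
  rel_bot : r ⊥ ⊥
  rel_top : r ⊤ ⊤
  rel_sup : ∀ a b c d : L, r a b → r c d → r (a ⊔ c) (b ⊔ d)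
  rel_inf : ∀ a b c d : L, r a b → r c d → r (a ⊓ c) (b ⊓ d)
  rel_mono : ∀ a b c d : L, a ≤ b → r b c → c ≤ d → r a d
  rel_interp : ∀ a b : L, r a b → ∃ c, r a c ∧ r c b
  rel_apprx : ∀ a : L, a = sSup {b | r b a}

/-- κ_L(a) = {b | b ≺ a}. -/
def kap [Order.Frame L] (r : L → L → Prop) (a : L) : Set L := {b | r b a}

/-- 𝔯f(I) = {a | a ≺ f(b) for some b ∈ I}. -/
def rmap [Order.Frame L] [Order.Frame M] (s : M → M → Prop) (f : L → M) (I : Set L) :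
    Set M := {a | ∃ b ∈ I, s a (f b)}


theorem kap_rndIdl [Order.Frame L] {r : L → L → Prop} (hr : IsProx r) (a : L) :
    RndIdl r (kap r a) := by
  refine ⟨⟨?_, ?_, ?_⟩, ?_⟩
  · exact hr.rel_mono ⊥ ⊥ ⊥ a le_rfl hr.rel_bot bot_le
  · exact fun x y hxy hy => hr.rel_mono x y a a hxy hy le_rfl
  · exact fun x y hx hy => by
      have := hr.rel_sup x a y a hx hy
      exact hr.rel_mono (x ⊔ y) (x ⊔ y) (a ⊔ a) a le_rfl this (by simp)
  · intro x hx
    obtain ⟨c, hc1, hc2⟩ := hr.rel_interp x a hx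
    exact ⟨c, hc2, hc1⟩

theorem sup_mem_of_idl [Order.Frame L] {I : Set L} (hI : IsIdl I) (F : Finset L)
    (hF : (↑F : Set L) ⊆ I) : F.sup id ∈ I := by
  classical
  induction F using Finset.induction_on with
  | empty => simpa using hI.1
  | insert a s h ih =>
    rw [Finset.sup_insert]
    refine hI.2.2 _ _ (hF (by simp)) (ih fun x hx => hF (by simp [hx]))

/-- for a frame homomorphism ψ : 𝔯L → M one has ψ = ς_M ∘ 𝔯(ψ∘κ_L). -/
theorem stmt7 [Order.Frame L] [Order.Frame M] (r : L → L → Prop) (s : M → M → Prop)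
    (hr : IsProx r) (hs : IsProx s) (ψ : Set L → M)
    (hψ_inf : ∀ I J : Set L, RndIdl r I → RndIdl r J → ψ (I ∩ J) = ψ I ⊓ ψ J)
    (hψ_top : ψ Set.univ = ⊤)
    (hψ_join : ∀ 𝒥 : Set (Set L), (∀ K ∈ 𝒥, RndIdl r K) →
      ψ (idlJoin 𝒥) = ⨆ K ∈ 𝒥, ψ K) :
    ∀ I : Set L, RndIdl r I →
      ψ I = sSup {b : M | ∃ c ∈ I, s b (ψ (kap r c))} := by
  intro I hI
  have hrnd : ∀ K ∈ (kap r '' I), RndIdl r K := by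
    rintro K ⟨c, _, rfl⟩; exact kap_rndIdl hr c
  have hIeq : I = idlJoin (kap r '' I) := by
    ext a
    constructor
    · intro ha
      obtain ⟨b, hb, hab⟩ := hI.2 a ha
      exact ⟨{a}, by
        intro x hx
        simp only [Finset.coe_singleton, Set.mem_singleton_iff] at hx
        subst hx
        exact ⟨kap r b, ⟨b, hb, rfl⟩, hab⟩, by simp⟩
    · rintro ⟨F, hF, rfl⟩
      refine sup_mem_of_idl hI.1 F fun x hx => ?_
      obtain ⟨K, ⟨c, hc, rfl⟩, hxK⟩ := hF hx
      exact hI.1.2.1 x c (hr.rel_le x c hxK) hc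
  calc ψ I = ψ (idlJoin (kap r '' I)) := by rw [← hIeq]
    _ = ⨆ K ∈ (kap r '' I), ψ K := hψ_join _ hrnd
    _ = ⨆ c ∈ I, ψ (kap r c) := by rw [iSup_image]
    _ = sSup {b : M | ∃ c ∈ I, s b (ψ (kap r c))} := by
        rw [sSup_eq_iSup']
        apply le_antisymm
        · refine iSup₂_le fun c hc => ?_
          rw [hs.rel_apprx (ψ (kap r c))]
          refine sSup_le fun b hb => ?_
          exact le_iSup_of_le (⟨b, c, hc, hb⟩ : {b : M | ∃ c ∈ I, s b (ψ (kap r c))}) le_rfl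
        · refine iSup_le fun ⟨b, c, hc, hb⟩ => ?_
          exact le_iSup₂_of_le c hc (hs.rel_le _ _ hb)
end

section
/- For a proximity frame L, the map r_L = 𝔯(κ_L) : 𝔯L → 𝔯𝔯L satisfies r_L(I) = {K ∈ 𝔯L | ς_L(K) ∈ I} = {K ∈ 𝔯L | K ≪ I}, and r_L is a frame isomorphism. -/
open Set

variable {L M : Type*}

/-- An ideal of the frame 𝔯L of round ideals: a collection of round ideals containing
the bottom ideal, downward closed, and closed under binary ideal joins. -/
def IsIdl2 [Order.Frame L] (r : L → L → Prop) (𝒥 : Set (Set L)) : Prop :=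
  (∀ K ∈ 𝒥, RndIdl r K) ∧ ({(⊥ : L)} : Set L) ∈ 𝒥 ∧
  (∀ I K : Set L, RndIdl r I → K ∈ 𝒥 → I ⊆ K → I ∈ 𝒥) ∧
  (∀ I K : Set L, I ∈ 𝒥 → K ∈ 𝒥 → idlJoin {I, K} ∈ 𝒥)

/-- A round ideal of (𝔯L, ≪). -/
def RndIdl2 [Order.Frame L] (r : L → L → Prop) (𝒥 : Set (Set L)) : Prop :=
  IsIdl2 r 𝒥 ∧ ∀ I ∈ 𝒥, ∃ K ∈ 𝒥, wb r I K

section Aux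

variable [Order.Frame L] {r : L → L → Prop}

lemma kap_rnd (hr : IsProx r) (a : L) : RndIdl r (kap r a) := by
  refine ⟨⟨hr.rel_mono _ _ _ _ le_rfl hr.rel_bot bot_le, ?_, ?_⟩, ?_⟩
  · intro x y hxy hy
    exact hr.rel_mono _ _ _ _ hxy hy le_rfl
  · intro x y hx hy
    exact hr.rel_mono _ _ _ _ le_rfl (hr.rel_sup _ _ _ _ hx hy) (sup_idem a).le
  · intro x hx
    obtain ⟨c, h1, h2⟩ := hr.rel_interp _ _ hx
    exact ⟨c, h2, h1⟩

lemma sSup_kap (hr : IsProx r) (a : L) : sSup (kap r a) = a :=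
  (hr.rel_apprx a).symm

lemma kap_mono (hr : IsProx r) {a b : L} (h : a ≤ b) : kap r a ⊆ kap r b :=
  fun _ hx => hr.rel_mono _ _ _ _ le_rfl hx h

lemma lemA {K I : Set L} (h : sSup K ∈ I) : wb r K I := by
  intro 𝒟 _ h𝒟 _ hsub
  obtain ⟨D, hD, hsD⟩ := hsub h
  exact ⟨D, hD, fun k hk => (h𝒟 D hD).1.2.1 k (sSup K) (le_sSup hk) hsD⟩

lemma lemB (hr : IsProx r) {K I : Set L} (hI : RndIdl r I) (h : wb r K I) :
    sSup K ∈ I := by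
  obtain ⟨D, ⟨a, ha, rfl⟩, hKD⟩ := h ((kap r ·) '' I) ⟨_, ⟨⊥, hI.1.1, rfl⟩⟩
    (by rintro _ ⟨a, _, rfl⟩; exact kap_rnd hr a)
    (by rintro _ ⟨a, ha, rfl⟩ _ ⟨b, hb, rfl⟩
        exact ⟨kap r (a ⊔ b), ⟨a ⊔ b, hI.1.2.2 a b ha hb, rfl⟩,
          kap_mono hr le_sup_left, kap_mono hr le_sup_right⟩)
    (fun x hx => by obtain ⟨b, hb, hxb⟩ := hI.2 x hx; exact ⟨_, ⟨b, hb, rfl⟩, hxb⟩)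
  have hle : sSup K ≤ a := by
    rw [← sSup_kap hr a]; exact sSup_le_sSup hKD
  exact hI.1.2.1 _ a hle ha

lemma finset_sup_union {A B : Set L} (hA : IsIdl A) (hB : IsIdl B) :
    ∀ F : Finset L, (↑F : Set L) ⊆ A ∪ B → ∃ a ∈ A, ∃ b ∈ B, F.sup id ≤ a ⊔ b := by
  classical
  intro F
  induction F using Finset.induction_on with
  | empty => exact fun _ => ⟨⊥, hA.1, ⊥, hB.1, by simp⟩
  | @insert c F hc ih =>
    intro hsub
    have hcm : c ∈ A ∪ B := hsub (by simp)
    obtain ⟨a, ha, b, hb, hle⟩ := ih (fun x hx => hsub (by simp [hx]))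
    rcases hcm with h | h
    · refine ⟨c ⊔ a, hA.2.2 _ _ h ha, b, hb, ?_⟩
      rw [Finset.sup_insert, sup_assoc]
      exact sup_le_sup_left hle c
    · refine ⟨a, ha, c ⊔ b, hB.2.2 _ _ h hb, ?_⟩
      rw [Finset.sup_insert, sup_left_comm]
      exact sup_le_sup_left hle c

lemma mem_idlJoin_pair {A B : Set L} (hA : IsIdl A) (hB : IsIdl B) (x : L) :
    x ∈ idlJoin {A, B} ↔ ∃ a ∈ A, ∃ b ∈ B, x ≤ a ⊔ b := by
  classical
  constructor
  · rintro ⟨F, hF, rfl⟩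
    exact finset_sup_union hA hB F (by simpa using hF)
  · rintro ⟨a, ha, b, hb, hle⟩
    refine ⟨{x ⊓ a, x ⊓ b}, ?_, ?_⟩
    · intro y hy
      simp only [Finset.coe_insert, Finset.coe_singleton, Set.mem_insert_iff,
        Set.mem_singleton_iff] at hy
      rcases hy with rfl | rfl
      · exact Set.mem_sUnion.2 ⟨A, by simp, hA.2.1 _ a inf_le_right ha⟩
      · exact Set.mem_sUnion.2 ⟨B, by simp, hB.2.1 _ b inf_le_right hb⟩
    · have : (({x ⊓ a, x ⊓ b} : Finset L)).sup id = (x ⊓ a) ⊔ (x ⊓ b) := by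
        simp [Finset.sup_insert]
      rw [this, ← inf_sup_left, inf_eq_left.2 hle]

lemma idlJoin_pair_rnd (hr : IsProx r) {A B : Set L} (hA : RndIdl r A)
    (hB : RndIdl r B) : RndIdl r (idlJoin {A, B}) := by
  refine ⟨⟨?_, ?_, ?_⟩, ?_⟩
  · exact (mem_idlJoin_pair hA.1 hB.1 ⊥).2 ⟨⊥, hA.1.1, ⊥, hB.1.1, by simp⟩
  · intro x y hxy hy
    obtain ⟨a, ha, b, hb, hle⟩ := (mem_idlJoin_pair hA.1 hB.1 y).1 hy
    exact (mem_idlJoin_pair hA.1 hB.1 x).2 ⟨a, ha, b, hb, hxy.trans hle⟩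
  · intro x y hx hy
    obtain ⟨a, ha, b, hb, hle⟩ := (mem_idlJoin_pair hA.1 hB.1 x).1 hx
    obtain ⟨a', ha', b', hb', hle'⟩ := (mem_idlJoin_pair hA.1 hB.1 y).1 hy
    refine (mem_idlJoin_pair hA.1 hB.1 _).2 ⟨a ⊔ a', hA.1.2.2 _ _ ha ha',
      b ⊔ b', hB.1.2.2 _ _ hb hb', ?_⟩
    calc x ⊔ y ≤ (a ⊔ b) ⊔ (a' ⊔ b') := sup_le_sup hle hle'
      _ = (a ⊔ a') ⊔ (b ⊔ b') := sup_sup_sup_comm a b a' b'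
  · intro x hx
    obtain ⟨a, ha, b, hb, hle⟩ := (mem_idlJoin_pair hA.1 hB.1 x).1 hx
    obtain ⟨a', ha', hra⟩ := hA.2 a ha
    obtain ⟨b', hb', hrb⟩ := hB.2 b hb
    refine ⟨a' ⊔ b', (mem_idlJoin_pair hA.1 hB.1 _).2 ⟨a', ha', b', hb', le_rfl⟩, ?_⟩
    exact hr.rel_mono _ _ _ _ hle (hr.rel_sup _ _ _ _ hra hrb) le_rfl

lemma subset_idlJoin_left {A B : Set L} (hA : IsIdl A) (hB : IsIdl B) :
    A ⊆ idlJoin {A, B} := fun a ha =>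
  (mem_idlJoin_pair hA hB a).2 ⟨a, ha, ⊥, hB.1, by simp⟩

lemma subset_idlJoin_right {A B : Set L} (hA : IsIdl A) (hB : IsIdl B) :
    B ⊆ idlJoin {A, B} := fun b hb =>
  (mem_idlJoin_pair hA hB b).2 ⟨⊥, hA.1, b, hb, by simp⟩

lemma sSup_idlJoin_pair {A B : Set L} (hA : IsIdl A) (hB : IsIdl B) :
    sSup (idlJoin {A, B}) = sSup A ⊔ sSup B := by
  apply le_antisymm
  · apply sSup_le
    intro x hx
    obtain ⟨a, ha, b, hb, hle⟩ := (mem_idlJoin_pair hA hB x).1 hx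
    exact hle.trans (sup_le_sup (le_sSup ha) (le_sSup hb))
  · exact sup_le (sSup_le_sSup (subset_idlJoin_left hA hB))
      (sSup_le_sSup (subset_idlJoin_right hA hB))

lemma bot_rnd (hr : IsProx r) : RndIdl r ({(⊥ : L)} : Set L) := by
  refine ⟨⟨rfl, ?_, ?_⟩, ?_⟩
  · intro a b hab hb
    simp only [Set.mem_singleton_iff] at *
    exact le_bot_iff.1 (hab.trans_eq hb)
  · intro a b ha hb
    simp only [Set.mem_singleton_iff] at *
    simp [ha, hb]
  · intro a ha
    simp only [Set.mem_singleton_iff] at ha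
    exact ⟨⊥, rfl, ha ▸ hr.rel_bot⟩

end Aux

/-- r_L = 𝔯(κ_L) satisfies
r_L(I) = {K | ς_L(K) ∈ I} = {K | K ≪ I}, and r_L is a frame isomorphism 𝔯L → 𝔯𝔯L. -/
theorem stmt15 [Order.Frame L] (r : L → L → Prop) (hr : IsProx r) :
    (∀ I : Set L, RndIdl r I →
      {K : Set L | RndIdl r K ∧ ∃ a ∈ I, wb r K (kap r a)} =
        {K : Set L | RndIdl r K ∧ sSup K ∈ I}) ∧
    (∀ I : Set L, RndIdl r I →
      {K : Set L | RndIdl r K ∧ sSup K ∈ I} = {K : Set L | RndIdl r K ∧ wb r K I}) ∧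
    (∀ I : Set L, RndIdl r I → RndIdl2 r {K : Set L | RndIdl r K ∧ sSup K ∈ I}) ∧
    (∀ I J : Set L, RndIdl r I → RndIdl r J →
      ({K : Set L | RndIdl r K ∧ sSup K ∈ I} ⊆ {K : Set L | RndIdl r K ∧ sSup K ∈ J}
        ↔ I ⊆ J)) ∧
    (∀ 𝒥 : Set (Set L), RndIdl2 r 𝒥 →
      ∃ I : Set L, RndIdl r I ∧ {K : Set L | RndIdl r K ∧ sSup K ∈ I} = 𝒥) := by
  refine ⟨?_, ?_, ?_, ?_, ?_⟩
  · -- Part 1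
    intro I hI
    ext K
    simp only [Set.mem_setOf_eq]
    constructor
    · rintro ⟨hK, a, ha, hwb⟩
      refine ⟨hK, hI.1.2.1 _ a ?_ ha⟩
      exact hr.rel_le _ _ (lemB hr (kap_rnd hr a) hwb)
    · rintro ⟨hK, hs⟩
      obtain ⟨a, ha, hra⟩ := hI.2 _ hs
      exact ⟨hK, a, ha, lemA hra⟩
  · -- Part 2
    intro I hI
    ext K
    simp only [Set.mem_setOf_eq]
    exact ⟨fun ⟨hK, hs⟩ => ⟨hK, lemA hs⟩, fun ⟨hK, hw⟩ => ⟨hK, lemB hr hI hw⟩⟩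
  · -- Part 3
    intro I hI
    refine ⟨⟨fun K hK => hK.1, ⟨bot_rnd hr, by simpa using hI.1.1⟩, ?_, ?_⟩, ?_⟩
    · rintro K K' hK ⟨hK', hs⟩ hsub
      exact ⟨hK, hI.1.2.1 _ _ (sSup_le_sSup hsub) hs⟩
    · rintro A B ⟨hA, hsA⟩ ⟨hB, hsB⟩
      refine ⟨idlJoin_pair_rnd hr hA hB, ?_⟩
      rw [sSup_idlJoin_pair hA.1 hB.1]
      exact hI.1.2.2 _ _ hsA hsB
    · rintro K ⟨hK, hs⟩
      obtain ⟨a, ha, hra⟩ := hI.2 _ hs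
      exact ⟨kap r a, ⟨kap_rnd hr a, by rw [sSup_kap hr a]; exact ha⟩, lemA hra⟩
  · -- Part 4
    intro I J hI hJ
    constructor
    · intro hsub x hx
      obtain ⟨b, hb, hrb⟩ := hI.2 x hx
      have : kap r b ∈ {K : Set L | RndIdl r K ∧ sSup K ∈ J} :=
        hsub ⟨kap_rnd hr b, by rw [sSup_kap hr b]; exact hb⟩
      have hbJ : b ∈ J := by rw [← sSup_kap hr b]; exact this.2
      exact hJ.1.2.1 x b (hr.rel_le _ _ hrb) hbJ
    · rintro hsub K ⟨hK, hs⟩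
      exact ⟨hK, hsub hs⟩
  · -- Part 5
    intro 𝒥 h𝒥
    have hmem : ∀ K ∈ 𝒥, RndIdl r K := h𝒥.1.1
    have hIrnd : RndIdl r (⋃₀ 𝒥) := by
      refine ⟨⟨⟨_, h𝒥.1.2.1, rfl⟩, ?_, ?_⟩, ?_⟩
      · rintro a b hab ⟨K, hK, hb⟩
        exact ⟨K, hK, (hmem K hK).1.2.1 a b hab hb⟩
      · rintro a b ⟨K₁, hK₁, ha⟩ ⟨K₂, hK₂, hb⟩
        refine ⟨idlJoin {K₁, K₂}, h𝒥.1.2.2.2 _ _ hK₁ hK₂, ?_⟩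
        exact (mem_idlJoin_pair (hmem _ hK₁).1 (hmem _ hK₂).1 _).2
          ⟨a, ha, b, hb, le_rfl⟩
      · rintro a ⟨K, hK, ha⟩
        obtain ⟨b, hb, hrb⟩ := (hmem K hK).2 a ha
        exact ⟨b, ⟨K, hK, hb⟩, hrb⟩
    refine ⟨⋃₀ 𝒥, hIrnd, ?_⟩
    ext K
    simp only [Set.mem_setOf_eq]
    constructor
    · rintro ⟨hK, K₀, hK₀, hs⟩
      refine h𝒥.1.2.2.1 K K₀ hK hK₀ fun k hk => ?_
      exact (hmem K₀ hK₀).1.2.1 k (sSup K) (le_sSup hk) hs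
    · intro hK
      obtain ⟨K', hK', hw⟩ := h𝒥.2 K hK
      exact ⟨hmem K hK, K', hK', lemB hr (hmem K' hK') hw⟩
end
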